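/- Consider the quadratic-linear task model: 𝒫 is a probability measure on ℝ^n with isotropic covariance Cov(ξ) = (σ_τ²/n)I_n, the task-optimal controls are θ*(ξ) = Aξ + b for a p×n real matrix A and b ∈ ℝ^p, and the task losses are L_ξ(θ) = (1/2)(θ − θ*(ξ))ᵀH(θ − θ*(ξ)) with H symmetric and μI ⪯ H ⪯ LI for constants 0 < μ ≤ L. Fix a step size 0 < η ≤ 1/L with ημ ≤ 1, set the initialization θ₀ = 𝔼_ξ[θ*(ξ)], and let θ_K(ξ) be the K-th gradient-descent iterate on L_ξ with step size η from θ₀, with ξ ↦ ‖ξ‖² integrable. Then the adaptation gap G_K = 𝔼_ξ[L_ξ(θ₀) − L_ξ(θ_K(ξ))] satisfies G_K ≥ c·σ_τ²·(1 − e^{−ημK}) for every K ∈ ℕ, where c = tr(AᵀHA)/(2n). -/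
import Mathlib


open MeasureTheory Matrix

set_option maxHeartbeats 1000000

/-- Theorem 1, Adaptation Gap Scaling Law, in the quadratic-linear
model. Let `P` be a probability measure on `ℝ^n` with square-integrable identity and
isotropic covariance `Cov(ξ) = (σ_τ²/n) I_n`, let the task-optimal controls be
`θ*(ξ) = Aξ + b`, and let the task losses be
`L_ξ(θ) = (1/2)(θ − θ*(ξ))ᵀ H (θ − θ*(ξ))` with `H` symmetric and `μI ⪯ H ⪯ LI`,
`0 < μ ≤ L`. Fix `0 < η ≤ 1/L` with `ημ ≤ 1`, initialize `θ₀ = 𝔼_ξ[θ*(ξ)]`, and let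
`θ_K(ξ)` be the `K`-th gradient-descent iterate on `L_ξ` (whose gradient is
`H(θ − θ*(ξ))`) with step size `η` from `θ₀`. Then the adaptation gap
`G_K = 𝔼_ξ[L_ξ(θ₀) − L_ξ(θ_K(ξ))]` satisfies `G_K ≥ c σ_τ² (1 − e^{−ημK})` with
`c = tr(Aᵀ H A)/(2n)`. -/
theorem adaptation_gap_scaling_law_quadratic_linear {p n : ℕ} (hn : 0 < n) (K : ℕ)
    (P : Measure (Fin n → ℝ)) [IsProbabilityMeasure P]
    (hL1 : ∀ i, Integrable (fun ξ : Fin n → ℝ => ξ i) P)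
    (hL2 : ∀ i j, Integrable (fun ξ : Fin n → ℝ => ξ i * ξ j) P)
    (στ : ℝ) (hστ : 0 ≤ στ)
    (ξbar : Fin n → ℝ) (hξbar : ∀ i, ξbar i = ∫ ξ, ξ i ∂P)
    (hiso : ∀ i j, (∫ ξ, (ξ i - ξbar i) * (ξ j - ξbar j) ∂P)
      = if i = j then στ ^ 2 / n else 0)
    (A : Matrix (Fin p) (Fin n) ℝ) (b : Fin p → ℝ)
    (H : Matrix (Fin p) (Fin p) ℝ) (hHsymm : H.IsSymm)
    (μ L : ℝ) (hμ : 0 < μ) (hμL : μ ≤ L)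
    (hlow : ∀ v : Fin p → ℝ, μ * (v ⬝ᵥ v) ≤ v ⬝ᵥ H.mulVec v)
    (hup : ∀ v : Fin p → ℝ, v ⬝ᵥ H.mulVec v ≤ L * (v ⬝ᵥ v))
    (η : ℝ) (hη0 : 0 < η) (hηL : η ≤ 1 / L) (hημ : η * μ ≤ 1)
    (θs : (Fin n → ℝ) → Fin p → ℝ) (hθs : ∀ ξ, θs ξ = A.mulVec ξ + b)
    (θ0 : Fin p → ℝ) (hθ0 : ∀ i, θ0 i = ∫ ξ, θs ξ i ∂P)
    (θit : (Fin n → ℝ) → ℕ → Fin p → ℝ)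
    (hit0 : ∀ ξ, θit ξ 0 = θ0)
    (hitrec : ∀ ξ k, θit ξ (k + 1) = θit ξ k - η • H.mulVec (θit ξ k - θs ξ))
    (Lloss : (Fin n → ℝ) → (Fin p → ℝ) → ℝ)
    (hLloss : ∀ ξ θ, Lloss ξ θ = (1 / 2) * ((θ - θs ξ) ⬝ᵥ H.mulVec (θ - θs ξ))) :
    ((Aᵀ * H * A).trace / (2 * n)) * στ ^ 2 * (1 - Real.exp (-(η * μ) * K))
      ≤ ∫ ξ, (Lloss ξ θ0 - Lloss ξ (θit ξ K)) ∂P := by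
  have hLpos : 0 < L := hμ.trans_le hμL
  have hηL1 : η * L ≤ 1 := by
    rw [le_div_iff₀ hLpos] at hηL; linarith
  set B : Matrix (Fin p) (Fin p) ℝ := 1 - η • H with hB
  have hBmul : ∀ u : Fin p → ℝ, B.mulVec u = u - η • H.mulVec u := by
    intro u
    rw [hB, Matrix.sub_mulVec, Matrix.one_mulVec, Matrix.smul_mulVec]
  -- symmetry of the bilinear form
  have hsymmdot : ∀ v w : Fin p → ℝ, v ⬝ᵥ H.mulVec w = H.mulVec v ⬝ᵥ w := by
    intro v w
    rw [Matrix.dotProduct_mulVec, ← Matrix.mulVec_transpose, hHsymm]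
  have hdotnn : ∀ v : Fin p → ℝ, 0 ≤ v ⬝ᵥ v := by
    intro v
    simp only [dotProduct]
    exact Finset.sum_nonneg fun i _ => mul_self_nonneg _
  have hqnn : ∀ v : Fin p → ℝ, 0 ≤ v ⬝ᵥ H.mulVec v := fun v =>
    le_trans (mul_nonneg hμ.le (hdotnn v)) (hlow v)
  -- one-step contraction
  have hstep : ∀ v : Fin p → ℝ,
      (B.mulVec v) ⬝ᵥ H.mulVec (B.mulVec v) ≤ (1 - η * μ) * (v ⬝ᵥ H.mulVec v) := by
    intro v
    set w := H.mulVec v with hw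
    have hBv : B.mulVec v = v - η • w := hBmul v
    have hcross : v ⬝ᵥ H.mulVec w = w ⬝ᵥ w := by rw [hsymmdot, hw]
    have hcross' : w ⬝ᵥ H.mulVec v = w ⬝ᵥ w := by rw [← hw, dotProduct_comm]
    have hexp : (B.mulVec v) ⬝ᵥ H.mulVec (B.mulVec v)
        = v ⬝ᵥ w - 2 * η * (w ⬝ᵥ w) + η ^ 2 * (w ⬝ᵥ H.mulVec w) := by
      rw [hBv, Matrix.mulVec_sub, Matrix.mulVec_smul, ← hw]
      simp only [sub_dotProduct, dotProduct_sub, smul_dotProduct,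
        dotProduct_smul, smul_eq_mul, hcross, hcross']
      ring
    -- Cauchy-Schwarz ingredient : μ * (v ⬝ᵥ w) ≤ w ⬝ᵥ w
    have hcs : (v ⬝ᵥ w) ^ 2 ≤ (v ⬝ᵥ v) * (w ⬝ᵥ w) := by
      simpa [dotProduct, sq, mul_pow] using
        Finset.sum_mul_sq_le_sq_mul_sq Finset.univ v w
    have hμvw : μ * (v ⬝ᵥ v) ≤ v ⬝ᵥ w := hlow v
    have hvwnn : 0 ≤ v ⬝ᵥ w := hqnn v
    have h2 : μ * (v ⬝ᵥ w) ≤ w ⬝ᵥ w := by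
      rcases eq_or_lt_of_le hvwnn with h | h
      · nlinarith [hdotnn w]
      · nlinarith [hdotnn v, hdotnn w]
    have h1 : w ⬝ᵥ H.mulVec w ≤ L * (w ⬝ᵥ w) := hup w
    rw [hexp]
    nlinarith [hdotnn w, mul_le_mul_of_nonneg_left h1 (sq_nonneg η),
      mul_le_mul_of_nonneg_left h2 hη0.le, mul_nonneg (mul_nonneg hη0.le hη0.le) (hdotnn w)]
  -- iterated contraction
  have hημnn : 0 ≤ 1 - η * μ := by linarith
  have hcontr : ∀ (u : Fin p → ℝ) (k : ℕ),
      ((B ^ k).mulVec u) ⬝ᵥ H.mulVec ((B ^ k).mulVec u)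
        ≤ (1 - η * μ) ^ k * (u ⬝ᵥ H.mulVec u) := by
    intro u k
    induction k with
    | zero => simp
    | succ k ih =>
        have hpow : (B ^ (k + 1)).mulVec u = B.mulVec ((B ^ k).mulVec u) := by
          rw [Matrix.mulVec_mulVec, ← pow_succ']
        rw [hpow, pow_succ']
        calc (B.mulVec ((B ^ k).mulVec u)) ⬝ᵥ H.mulVec (B.mulVec ((B ^ k).mulVec u))
            ≤ (1 - η * μ) * (((B ^ k).mulVec u) ⬝ᵥ H.mulVec ((B ^ k).mulVec u)) := hstep _
          _ ≤ (1 - η * μ) * ((1 - η * μ) ^ k * (u ⬝ᵥ H.mulVec u)) := by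
              exact mul_le_mul_of_nonneg_left ih hημnn
          _ = (1 - η * μ) * (1 - η * μ) ^ k * (u ⬝ᵥ H.mulVec u) := by ring
  -- the iterates
  have hdiffit : ∀ ξ k, θit ξ k - θs ξ = (B ^ k).mulVec (θ0 - θs ξ) := by
    intro ξ k
    induction k with
    | zero => simp [hit0]
    | succ k ih =>
        have hθk : θit ξ k = (B ^ k).mulVec (θ0 - θs ξ) + θs ξ := by
          rw [← ih]; abel
        have hp : (B ^ (k + 1)).mulVec (θ0 - θs ξ) = B.mulVec ((B ^ k).mulVec (θ0 - θs ξ)) := by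
          rw [Matrix.mulVec_mulVec, ← pow_succ']
        rw [hitrec, ih, hθk, hp, hBmul]
        abel
  -- θ0 = A ξbar + b
  have hθ0eq : θ0 = A.mulVec ξbar + b := by
    funext i
    have hint : ∀ j : Fin n, Integrable (fun ξ : Fin n → ℝ => A i j * ξ j) P :=
      fun j => (hL1 j).const_mul _
    have hfe : (fun ξ : Fin n → ℝ => θs ξ i)
        = fun ξ : Fin n → ℝ => (∑ j, A i j * ξ j) + b i := by
      funext ξ; simp [hθs, Matrix.mulVec, dotProduct]
    rw [hθ0, hfe, integral_add (integrable_finset_sum _ fun j _ => hint j) (integrable_const _),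
      integral_finset_sum _ fun j _ => hint j]
    simp only [integral_const, measure_univ, ENNReal.toReal_one, one_smul, smul_eq_mul]
    have : ∀ j : Fin n, ∫ ξ, A i j * ξ j ∂P = A i j * ξbar j := by
      intro j; rw [integral_const_mul, ← hξbar]
    simp only [this]
    simp [Matrix.mulVec, dotProduct]
  have hd0 : ∀ ξ : Fin n → ℝ, θ0 - θs ξ = A.mulVec (ξbar - ξ) := by
    intro ξ
    rw [hθ0eq, hθs, Matrix.mulVec_sub]
    abel
  -- conjugation identity
  have hconj : ∀ (C : Matrix (Fin p) (Fin n) ℝ) (v : Fin n → ℝ),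
      (C.mulVec v) ⬝ᵥ H.mulVec (C.mulVec v) = v ⬝ᵥ (Cᵀ * H * C).mulVec v := by
    intro C v
    conv_rhs => rw [Matrix.mul_assoc, ← Matrix.mulVec_mulVec, ← Matrix.mulVec_mulVec,
      Matrix.dotProduct_mulVec, Matrix.vecMul_transpose]
  -- integral of a quadratic form
  have hquadint : ∀ M : Matrix (Fin n) (Fin n) ℝ,
      Integrable (fun ξ : Fin n → ℝ => (ξbar - ξ) ⬝ᵥ M.mulVec (ξbar - ξ)) P ∧
      ∫ ξ, (ξbar - ξ) ⬝ᵥ M.mulVec (ξbar - ξ) ∂P = στ ^ 2 / n * M.trace := by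
    intro M
    have hptw : ∀ ξ : Fin n → ℝ, (ξbar - ξ) ⬝ᵥ M.mulVec (ξbar - ξ)
        = ∑ i, ∑ j, M i j * ((ξ i - ξbar i) * (ξ j - ξbar j)) := by
      intro ξ
      simp only [dotProduct, Matrix.mulVec, Finset.mul_sum, Pi.sub_apply]
      exact Finset.sum_congr rfl fun i _ => Finset.sum_congr rfl fun j _ => by ring
    have hintij : ∀ i j : Fin n,
        Integrable (fun ξ : Fin n → ℝ => M i j * ((ξ i - ξbar i) * (ξ j - ξbar j))) P := by
      intro i j
      have hfe : (fun ξ : Fin n → ℝ => (ξ i - ξbar i) * (ξ j - ξbar j))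
          = fun ξ : Fin n → ℝ => ξ i * ξ j - ξbar j * ξ i - ξbar i * ξ j + ξbar i * ξbar j := by
        funext ξ; ring
      have : Integrable (fun ξ : Fin n → ℝ => (ξ i - ξbar i) * (ξ j - ξbar j)) P := by
        rw [hfe]
        exact (((hL2 i j).sub ((hL1 i).const_mul _)).sub ((hL1 j).const_mul _)).add
          (integrable_const _)
      exact this.const_mul _
    have hfeq : (fun ξ : Fin n → ℝ => (ξbar - ξ) ⬝ᵥ M.mulVec (ξbar - ξ))
        = fun ξ : Fin n → ℝ => ∑ i, ∑ j, M i j * ((ξ i - ξbar i) * (ξ j - ξbar j)) :=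
      funext hptw
    constructor
    · rw [hfeq]
      exact integrable_finset_sum _ fun i _ => integrable_finset_sum _ fun j _ => hintij i j
    · rw [hfeq, integral_finset_sum _ fun i _ => integrable_finset_sum _ fun j _ => hintij i j]
      have : ∀ i : Fin n, ∫ ξ, (∑ j, M i j * ((ξ i - ξbar i) * (ξ j - ξbar j))) ∂P
          = ∑ j, M i j * (if i = j then στ ^ 2 / n else 0) := by
        intro i
        rw [integral_finset_sum _ fun j _ => hintij i j]
        exact Finset.sum_congr rfl fun j _ => by rw [integral_const_mul, hiso i j]
      simp only [this, mul_ite, mul_zero, Finset.sum_ite_eq, Finset.mem_univ, if_true]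
      rw [Matrix.trace, Finset.mul_sum]
      exact Finset.sum_congr rfl fun i _ => by rw [Matrix.diag_apply, mul_comm]
  -- express the two losses as quadratic forms in ξbar - ξ
  have hL0 : ∀ ξ : Fin n → ℝ, Lloss ξ θ0
      = (1 / 2) * ((ξbar - ξ) ⬝ᵥ (Aᵀ * H * A).mulVec (ξbar - ξ)) := by
    intro ξ
    rw [hLloss, hd0, hconj]
  have hLK : ∀ ξ : Fin n → ℝ, Lloss ξ (θit ξ K)
      = (1 / 2) * ((ξbar - ξ) ⬝ᵥ ((B ^ K * A)ᵀ * H * (B ^ K * A)).mulVec (ξbar - ξ)) := by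
    intro ξ
    rw [hLloss, hdiffit, hd0, Matrix.mulVec_mulVec, hconj]
  -- compute the integral of the gap
  set M0 : Matrix (Fin n) (Fin n) ℝ := Aᵀ * H * A with hM0
  set MK : Matrix (Fin n) (Fin n) ℝ := (B ^ K * A)ᵀ * H * (B ^ K * A) with hMK
  have hI0 := hquadint M0
  have hIK := hquadint MK
  have hGap : ∫ ξ, (Lloss ξ θ0 - Lloss ξ (θit ξ K)) ∂P
      = (1 / 2) * (στ ^ 2 / n * M0.trace) - (1 / 2) * (στ ^ 2 / n * MK.trace) := by
    have hfe : (fun ξ : Fin n → ℝ => Lloss ξ θ0 - Lloss ξ (θit ξ K))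
        = fun ξ : Fin n → ℝ =>
          (1 / 2) * ((ξbar - ξ) ⬝ᵥ M0.mulVec (ξbar - ξ))
            - (1 / 2) * ((ξbar - ξ) ⬝ᵥ MK.mulVec (ξbar - ξ)) := by
      funext ξ; rw [hL0, hLK]
    rw [hfe, integral_sub (hI0.1.const_mul _) (hIK.1.const_mul _),
      integral_const_mul, integral_const_mul, hI0.2, hIK.2]
  -- trace bounds
  have hdiag : ∀ (C : Matrix (Fin p) (Fin n) ℝ) (j : Fin n),
      (Cᵀ * H * C) j j = (C.mulVec (Pi.single j 1)) ⬝ᵥ H.mulVec (C.mulVec (Pi.single j 1)) := by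
    intro C j
    rw [hconj]
    simp [Matrix.mulVec, dotProduct, Pi.single_apply]
  have htr0nn : 0 ≤ M0.trace := by
    rw [Matrix.trace]
    exact Finset.sum_nonneg fun j _ => by
      rw [Matrix.diag_apply, hM0, hdiag]; exact hqnn _
  have htrKnn : 0 ≤ MK.trace := by
    rw [Matrix.trace]
    exact Finset.sum_nonneg fun j _ => by
      rw [Matrix.diag_apply, hMK, hdiag]; exact hqnn _
  have htrbound : MK.trace ≤ (1 - η * μ) ^ K * M0.trace := by
    rw [Matrix.trace, Matrix.trace, Finset.mul_sum]
    refine Finset.sum_le_sum fun j _ => ?_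
    rw [Matrix.diag_apply, Matrix.diag_apply, hMK, hM0, hdiag, hdiag,
      ← Matrix.mulVec_mulVec]
    exact hcontr (A.mulVec (Pi.single j 1)) K
  -- exponential bound
  have hexpb : (1 - η * μ) ^ K ≤ Real.exp (-(η * μ) * K) := by
    have h1 : 1 - η * μ ≤ Real.exp (-(η * μ)) := by
      have := Real.add_one_le_exp (-(η * μ)); linarith
    calc (1 - η * μ) ^ K ≤ Real.exp (-(η * μ)) ^ K :=
          pow_le_pow_left₀ hημnn h1 K
      _ = Real.exp (-(η * μ) * K) := by
          rw [← Real.exp_nat_mul, mul_comm]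
  have htrK : MK.trace ≤ Real.exp (-(η * μ) * K) * M0.trace :=
    htrbound.trans (mul_le_mul_of_nonneg_right hexpb htr0nn)
  -- finish
  rw [hGap]
  have hnpos : (0 : ℝ) < n := by exact_mod_cast hn
  have hfac : 0 ≤ στ ^ 2 / n := by positivity
  have key : M0.trace * (1 - Real.exp (-(η * μ) * K)) ≤ M0.trace - MK.trace := by
    nlinarith [htrK]
  calc (M0.trace / (2 * n)) * στ ^ 2 * (1 - Real.exp (-(η * μ) * K))
      = (1 / 2) * (στ ^ 2 / n) * (M0.trace * (1 - Real.exp (-(η * μ) * K))) := by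
        field_simp
    _ ≤ (1 / 2) * (στ ^ 2 / n) * (M0.trace - MK.trace) := by
        have : (0:ℝ) ≤ (1 / 2) * (στ ^ 2 / n) := by positivity
        exact mul_le_mul_of_nonneg_left key this
    _ = (1 / 2) * (στ ^ 2 / n * M0.trace) - (1 / 2) * (στ ^ 2 / n * MK.trace) := by ring
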